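/- If B = {0, x, ¬x, 1} is a four-element Boolean subalgebra of a Boolean algebra and C is a Boolean subalgebra covering B in the lattice of Boolean subalgebras, then exactly one of x and ¬x is an atom of C. -/
import Mathlib


def IsBoolSubalg {B : Type*} [BooleanAlgebra B] (S : Set B) : Prop :=
  ⊥ ∈ S ∧ ⊤ ∈ S ∧ (∀ x ∈ S, ∀ y ∈ S, x ⊓ y ∈ S) ∧
    (∀ x ∈ S, ∀ y ∈ S, x ⊔ y ∈ S) ∧ ∀ x ∈ S, xᶜ ∈ S

/-- a is an atom of the subalgebra C: a minimal nonzero element of C. -/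
def IsAtomIn {B : Type*} [BooleanAlgebra B] (C : Set B) (a : B) : Prop :=
  a ∈ C ∧ a ≠ ⊥ ∧ ∀ b ∈ C, b < a → b = ⊥

lemma aux_atom {β : Type*} [BooleanAlgebra β] (x b : β) (C : Set β) (hC : IsBoolSubalg C)
    (hx1 : x ≠ ⊤) (hxC : x ∈ C)
    (hmax : ∀ D : Set β, IsBoolSubalg D → x ∈ D → b ∈ D → D ⊆ C → D = C)
    (hbC : b ∈ C) (hbx : b < x) : IsAtomIn C xᶜ := by
  set D : Set β := {c ∈ C | c ⊓ xᶜ = ⊥ ∨ xᶜ ≤ c} with hD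
  have hDsub : D ⊆ C := fun c hc => hc.1
  have hDalg : IsBoolSubalg D := by
    obtain ⟨h0, h1, hinf, hsup, hcompl⟩ := hC
    refine ⟨⟨h0, Or.inl (by simp)⟩, ⟨h1, Or.inr le_top⟩, ?_, ?_, ?_⟩
    · rintro c ⟨hcC, hc⟩ d ⟨hdC, hd⟩
      refine ⟨hinf c hcC d hdC, ?_⟩
      rcases hc with hc | hc
      · left
        have : c ⊓ d ⊓ xᶜ ≤ c ⊓ xᶜ := by
          gcongr; exact inf_le_left
        simpa [hc] using le_antisymm (hc ▸ this) bot_le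
      · rcases hd with hd | hd
        · left
          have : c ⊓ d ⊓ xᶜ ≤ d ⊓ xᶜ := by
            gcongr; exact inf_le_right
          simpa [hd] using le_antisymm (hd ▸ this) bot_le
        · exact Or.inr (le_inf hc hd)
    · rintro c ⟨hcC, hc⟩ d ⟨hdC, hd⟩
      refine ⟨hsup c hcC d hdC, ?_⟩
      rcases hc with hc | hc
      · rcases hd with hd | hd
        · left; rw [inf_sup_right, hc, hd, sup_idem]
        · exact Or.inr (hd.trans le_sup_right)
      · exact Or.inr (hc.trans le_sup_left)
    · rintro c ⟨hcC, hc⟩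
      refine ⟨hcompl c hcC, ?_⟩
      rcases hc with hc | hc
      · right
        exact (disjoint_iff.mpr (by rwa [inf_comm] at hc) : Disjoint xᶜ c).le_compl_right
      · left
        have : cᶜ ⊓ xᶜ ≤ cᶜ ⊓ c := by gcongr
        simpa using this
  have hxD : x ∈ D := ⟨hxC, Or.inl (by simp)⟩
  have hbD : b ∈ D := ⟨hbC, Or.inl (by
      have : b ⊓ xᶜ ≤ x ⊓ xᶜ := inf_le_inf_right _ hbx.le
      simpa using this)⟩
  have hDC : D = C := hmax D hDalg hxD hbD hDsub
  refine ⟨hC.2.2.2.2 x hxC, by simpa using hx1, ?_⟩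
  intro c hcC hclt
  have hcD : c ∈ D := hDC ▸ hcC
  rcases hcD.2 with hc | hc
  · rw [← inf_eq_left.mpr hclt.le, hc]
  · exact absurd (lt_of_le_of_lt hc hclt) (lt_irrefl _)

/-- If C covers the four-element subalgebra {⊥, x, xᶜ, ⊤} in the lattice of Boolean
subalgebras, then exactly one of x and xᶜ is an atom of C. -/
theorem cover_of_four_element {B : Type*} [BooleanAlgebra B] (x : B)
    (hx0 : x ≠ ⊥) (hx1 : x ≠ ⊤)
    (hB : IsBoolSubalg ({⊥, x, xᶜ, ⊤} : Set B)) (C : Set B) (hC : IsBoolSubalg C)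
    (hcov : (⟨{⊥, x, xᶜ, ⊤}, hB⟩ : {S : Set B // IsBoolSubalg S}) ⋖ ⟨C, hC⟩) :
    Xor' (IsAtomIn C x) (IsAtomIn C xᶜ) := by
  have hBC : ({⊥, x, xᶜ, ⊤} : Set B) ⊂ C := hcov.1
  have hxC : x ∈ C := hBC.subset (by simp)
  have hxcC : xᶜ ∈ C := hBC.subset (by simp)
  -- maximality extracted from the covering hypothesis
  have hmax : ∀ D : Set B, IsBoolSubalg D → D ⊆ C →
      (∃ b ∈ D, b ∉ ({⊥, x, xᶜ, ⊤} : Set B)) → x ∈ D → D = C := by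
    rintro D hD hDC ⟨b, hbD, hbB⟩ hxD
    have hBD : ({⊥, x, xᶜ, ⊤} : Set B) ⊆ D := by
      intro y hy
      simp only [Set.mem_insert_iff, Set.mem_singleton_iff] at hy
      rcases hy with rfl | rfl | rfl | rfl
      · exact hD.1
      · exact hxD
      · exact hD.2.2.2.2 x hxD
      · exact hD.2.1
    have hlt : (⟨{⊥, x, xᶜ, ⊤}, hB⟩ : {S : Set B // IsBoolSubalg S}) < ⟨D, hD⟩ :=
      Subtype.mk_lt_mk.mpr ((Set.ssubset_iff_of_subset hBD).mpr ⟨b, hbD, hbB⟩)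
    have hne := hcov.2 hlt
    rw [Subtype.mk_lt_mk] at hne
    by_contra h
    exact hne (hDC.ssubset_of_ne h)
  -- not both can be atoms
  have hnotboth : ¬ (IsAtomIn C x ∧ IsAtomIn C xᶜ) := by
    rintro ⟨⟨_, _, hax⟩, ⟨_, _, haxc⟩⟩
    obtain ⟨c, hcC, hcB⟩ := Set.exists_of_ssubset hBC
    have h1 : c ⊓ x = ⊥ ∨ c ⊓ x = x := by
      rcases lt_or_eq_of_le (inf_le_right : c ⊓ x ≤ x) with h | h
      · exact Or.inl (hax _ (hC.2.2.1 c hcC x hxC) h)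
      · exact Or.inr h
    have h2 : c ⊓ xᶜ = ⊥ ∨ c ⊓ xᶜ = xᶜ := by
      rcases lt_or_eq_of_le (inf_le_right : c ⊓ xᶜ ≤ xᶜ) with h | h
      · exact Or.inl (haxc _ (hC.2.2.1 c hcC xᶜ hxcC) h)
      · exact Or.inr h
    have hc : c = (c ⊓ x) ⊔ (c ⊓ xᶜ) := by
      rw [← inf_sup_left, sup_compl_eq_top, inf_top_eq]
    apply hcB
    rcases h1 with h1 | h1 <;> rcases h2 with h2 | h2 <;>
      simp [h1, h2, sup_compl_eq_top] at hc <;> simp [hc]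
  -- the aux lemma, specialized for x (gives xᶜ atom) and xᶜ (gives x atom)
  have key1 : (∃ b ∈ C, b ≠ ⊥ ∧ b < x) → IsAtomIn C xᶜ := by
    rintro ⟨b, hbC, hb0, hbx⟩
    refine aux_atom x b C hC hx1 hxC ?_ hbC hbx
    intro D hD hxD hbD hDC
    refine hmax D hD hDC ⟨b, hbD, ?_⟩ hxD
    simp only [Set.mem_insert_iff, Set.mem_singleton_iff]
    push_neg
    refine ⟨hb0, hbx.ne, ?_, ?_⟩
    · rintro rfl
      have h' : xᶜ ≤ xᶜᶜ := by simpa using hbx.le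
      exact hx1 (by simpa using le_compl_self.mp h')
    · rintro rfl
      exact not_top_lt hbx
  have key2 : (∃ b ∈ C, b ≠ ⊥ ∧ b < xᶜ) → IsAtomIn C x := by
    rintro ⟨b, hbC, hb0, hbx⟩
    have : IsAtomIn C xᶜᶜ := by
      refine aux_atom xᶜ b C hC (by simpa using hx0) hxcC ?_ hbC hbx
      intro D hD hxD hbD hDC
      have hxD' : x ∈ D := by
        have := hD.2.2.2.2 xᶜ hxD
        rwa [compl_compl] at this
      refine hmax D hD hDC ⟨b, hbD, ?_⟩ hxD'
      simp only [Set.mem_insert_iff, Set.mem_singleton_iff]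
      push_neg
      refine ⟨hb0, ?_, hbx.ne, ?_⟩
      · rintro rfl
        exact hx0 (le_compl_self.mp hbx.le)
      · rintro rfl
        exact not_top_lt hbx
    rwa [compl_compl] at this
  by_cases hx : IsAtomIn C x
  · exact Or.inl ⟨hx, fun h => hnotboth ⟨hx, h⟩⟩
  · -- x not an atom: extract a witness b with ⊥ ≠ b < x
    have : ∃ b ∈ C, b ≠ ⊥ ∧ b < x := by
      by_contra h
      push_neg at h
      exact hx ⟨hxC, hx0, fun b hbC hblt => by
        by_contra hb0
        exact h b hbC hb0 hblt⟩
    exact Or.inr ⟨key1 this, hx⟩
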